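/- arXiv:math/0505056 — 3 statements merged into one kernel-verified Lean document; each statement's English description precedes it below -/
import Mathlib

section
/- In R = ℚ[a, x₁, x₂, x₃, x₄], the pair of matrices U₀⁰ = [[x₄ − x₂, 0], [0, 1]], U₀¹ = [[x₄, −x₂], [−1, 1]] defines a morphism of matrix factorizations χ₀ from (P₀, P₁) to (Q₀, Q₁): namely U₀¹ · P₀ = Q₀ · U₀⁰ and U₀⁰ · P₁ = Q₁ · U₀¹. -/
open MvPolynomial in
/-- The pair `(U₀⁰, U₀¹)` defines a morphism of matrix factorizations
`χ₀ : C(Γ⁰) → C(Γ¹)`. -/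
theorem chi0_is_morphism_of_matrix_factorizations :
    let a : MvPolynomial (Fin 5) ℚ := X 0
    let x₁ : MvPolynomial (Fin 5) ℚ := X 1
    let x₂ : MvPolynomial (Fin 5) ℚ := X 2
    let x₃ : MvPolynomial (Fin 5) ℚ := X 3
    let x₄ : MvPolynomial (Fin 5) ℚ := X 4
    let P₀ : Matrix (Fin 2) (Fin 2) (MvPolynomial (Fin 5) ℚ) :=
      !![a, x₃ - x₂; a, x₁ - x₄]
    let P₁ : Matrix (Fin 2) (Fin 2) (MvPolynomial (Fin 5) ℚ) :=
      !![x₁ - x₄, x₂ - x₃; -a, a]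
    let Q₀ : Matrix (Fin 2) (Fin 2) (MvPolynomial (Fin 5) ℚ) :=
      !![a, x₃ * x₄ - x₁ * x₂; 0, x₁ + x₂ - x₃ - x₄]
    let Q₁ : Matrix (Fin 2) (Fin 2) (MvPolynomial (Fin 5) ℚ) :=
      !![x₁ + x₂ - x₃ - x₄, x₁ * x₂ - x₃ * x₄; 0, a]
    let U₀0 : Matrix (Fin 2) (Fin 2) (MvPolynomial (Fin 5) ℚ) :=
      !![x₄ - x₂, 0; 0, 1]
    let U₀1 : Matrix (Fin 2) (Fin 2) (MvPolynomial (Fin 5) ℚ) :=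
      !![x₄, -x₂; -1, 1]
    U₀1 * P₀ = Q₀ * U₀0 ∧ U₀0 * P₁ = Q₁ * U₀1 := by
  constructor <;>
  · ext i j : 1
    fin_cases i <;> fin_cases j <;>
      simp only [Matrix.mul_apply, Fin.sum_univ_two, Matrix.cons_val', Matrix.cons_val_zero,
          Matrix.cons_val_one, Matrix.head_cons, Matrix.head_fin_const, Matrix.empty_val',
          Matrix.cons_val_fin_one, Matrix.of_apply, Fin.mk_zero, Fin.mk_one] <;> ring
end

section
/- In R = ℚ[a, x₁, x₂, x₃, x₄], the pair of matrices U₁⁰ = [[1, 0], [0, x₄ − x₂]], U₁¹ = [[1, x₂], [1, x₄]] defines a morphism of matrix factorizations χ₁ from (Q₀, Q₁) to (P₀, P₁): namely U₁¹ · Q₀ = P₀ · U₁⁰ and U₁⁰ · Q₁ = P₁ · U₁¹. -/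
open MvPolynomial in
/-- The pair `(U₁⁰, U₁¹)` defines a morphism of matrix factorizations
`χ₁ : C(Γ¹) → C(Γ⁰)`. -/
theorem chi1_is_morphism_of_matrix_factorizations :
    let a : MvPolynomial (Fin 5) ℚ := X 0
    let x₁ : MvPolynomial (Fin 5) ℚ := X 1
    let x₂ : MvPolynomial (Fin 5) ℚ := X 2
    let x₃ : MvPolynomial (Fin 5) ℚ := X 3
    let x₄ : MvPolynomial (Fin 5) ℚ := X 4
    let P₀ : Matrix (Fin 2) (Fin 2) (MvPolynomial (Fin 5) ℚ) :=
      !![a, x₃ - x₂; a, x₁ - x₄]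
    let P₁ : Matrix (Fin 2) (Fin 2) (MvPolynomial (Fin 5) ℚ) :=
      !![x₁ - x₄, x₂ - x₃; -a, a]
    let Q₀ : Matrix (Fin 2) (Fin 2) (MvPolynomial (Fin 5) ℚ) :=
      !![a, x₃ * x₄ - x₁ * x₂; 0, x₁ + x₂ - x₃ - x₄]
    let Q₁ : Matrix (Fin 2) (Fin 2) (MvPolynomial (Fin 5) ℚ) :=
      !![x₁ + x₂ - x₃ - x₄, x₁ * x₂ - x₃ * x₄; 0, a]
    let U₁0 : Matrix (Fin 2) (Fin 2) (MvPolynomial (Fin 5) ℚ) :=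
      !![1, 0; 0, x₄ - x₂]
    let U₁1 : Matrix (Fin 2) (Fin 2) (MvPolynomial (Fin 5) ℚ) :=
      !![1, x₂; 1, x₄]
    U₁1 * Q₀ = P₀ * U₁0 ∧ U₁0 * Q₁ = P₁ * U₁1 := by
  intro a x₁ x₂ x₃ x₄ P₀ P₁ Q₀ Q₁ U₁0 U₁1
  constructor <;> ext i j <;> fin_cases i <;> fin_cases j <;>
    simp only [P₀, P₁, Q₀, Q₁, U₁0, U₁1, Matrix.mul_apply, Fin.sum_univ_two,
      Matrix.cons_val', Matrix.cons_val_zero, Matrix.cons_val_one, Matrix.head_cons,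
      Matrix.empty_val', Matrix.cons_val_fin_one, Matrix.head_fin_const,
      Matrix.of_apply, Fin.mk_zero, Fin.mk_one] <;> ring
end

section
/- In R = ℚ[a, x₁, x₂, x₃, x₄], let B₀ = [[a, −(x₂ − x₃)(x₄ − x₂)], [0, x₁ + x₂ − x₃ − x₄]] and B₁ = [[x₁ + x₂ − x₃ − x₄, (x₂ − x₃)(x₄ − x₂)], [0, a]] (the Koszul factorization with rows (a, x₁ + x₂ − x₃ − x₄), (0, (x₂ − x₃)(x₄ − x₂))). Then [[1, −x₂], [0, 1]] · B₀ = Q₀ and B₁ = Q₁ · [[1, −x₂], [0, 1]], so (I₂, [[1, −x₂], [0, 1]]) is an isomorphism of matrix factorizations from (B₀, B₁) to the factorization C(Γ¹) = (Q₀, Q₁). -/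
open MvPolynomial in
/-- The pair `(I₂, [[1,-x₂],[0,1]])` is an isomorphism of matrix factorizations
from the Koszul factorization with rows `(a, x₁+x₂-x₃-x₄)`, `(0, (x₂-x₃)(x₄-x₂))`
to the factorization `C(Γ¹) = (Q₀, Q₁)`. -/
theorem row_reduction_iso_CGamma1 :
    let a : MvPolynomial (Fin 5) ℚ := X 0
    let x₁ : MvPolynomial (Fin 5) ℚ := X 1
    let x₂ : MvPolynomial (Fin 5) ℚ := X 2
    let x₃ : MvPolynomial (Fin 5) ℚ := X 3
    let x₄ : MvPolynomial (Fin 5) ℚ := X 4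
    let Q₀ : Matrix (Fin 2) (Fin 2) (MvPolynomial (Fin 5) ℚ) :=
      !![a, x₃ * x₄ - x₁ * x₂; 0, x₁ + x₂ - x₃ - x₄]
    let Q₁ : Matrix (Fin 2) (Fin 2) (MvPolynomial (Fin 5) ℚ) :=
      !![x₁ + x₂ - x₃ - x₄, x₁ * x₂ - x₃ * x₄; 0, a]
    let B₀ : Matrix (Fin 2) (Fin 2) (MvPolynomial (Fin 5) ℚ) :=
      !![a, -((x₂ - x₃) * (x₄ - x₂)); 0, x₁ + x₂ - x₃ - x₄]
    let B₁ : Matrix (Fin 2) (Fin 2) (MvPolynomial (Fin 5) ℚ) :=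
      !![x₁ + x₂ - x₃ - x₄, (x₂ - x₃) * (x₄ - x₂); 0, a]
    let T : Matrix (Fin 2) (Fin 2) (MvPolynomial (Fin 5) ℚ) := !![1, -x₂; 0, 1]
    (T * B₀ = Q₀ ∧ B₁ = Q₁ * T) ∧ IsUnit T := by
  intro a x₁ x₂ x₃ x₄ Q₀ Q₁ B₀ B₁ T
  have e1 : T * B₀ = Q₀ := by
    show (!![1, -x₂; 0, 1] : Matrix (Fin 2) (Fin 2) _) * !![a, -((x₂ - x₃) * (x₄ - x₂)); 0, x₁ + x₂ - x₃ - x₄] = _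
    rw [Matrix.mul_fin_two]
    congr 1 <;> ring
  have e2 : B₁ = Q₁ * T := by
    show (!![x₁ + x₂ - x₃ - x₄, (x₂ - x₃) * (x₄ - x₂); 0, a] : Matrix (Fin 2) (Fin 2) _) = !![x₁ + x₂ - x₃ - x₄, x₁ * x₂ - x₃ * x₄; 0, a] * !![1, -x₂; 0, 1]
    rw [Matrix.mul_fin_two]
    congr 1 <;> ring
  refine ⟨⟨e1, e2⟩, ?_⟩
  have h1 : T * !![1, x₂; 0, 1] = 1 := by
    show (!![1, -x₂; 0, 1] : Matrix (Fin 2) (Fin 2) _) * _ = _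
    rw [Matrix.mul_fin_two, Matrix.one_fin_two]
    congr 1 <;> ring
  have h2 : !![1, x₂; 0, 1] * T = 1 := by
    show _ * (!![1, -x₂; 0, 1] : Matrix (Fin 2) (Fin 2) _) = _
    rw [Matrix.mul_fin_two, Matrix.one_fin_two]
    congr 1 <;> ring
  exact ⟨⟨T, !![1, x₂; 0, 1], h1, h2⟩, rfl⟩
end
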